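/- Let X ~ MaxGumbel(μx, β) and Y ~ MinGumbel(μy, β) be independent with β > 0 and uniform base measure. The Bernoulli parameter ∏_{j=1}^d E[max(Y_j - X_j, 0)] for a d-dimensional Gumbel box with independent coordinates equals ∏_{j=1}^d 2β·K₀(2e^{-(μ_j^max - μ_j^min)/(2β)}); i.e., the expected volume of the box factorizes over dimensions. -/

import Mathlib

open MeasureTheory

/-- Density of MaxGumbel(μ, β). -/
noncomputable def maxGumbelPDF (μ β x : ℝ) : ℝ :=
  (1 / β) * Real.exp (-(x - μ) / β - Real.exp (-(x - μ) / β))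

/-- Density of MinGumbel(μ, β). -/
noncomputable def minGumbelPDF (μ β y : ℝ) : ℝ :=
  (1 / β) * Real.exp ((y - μ) / β - Real.exp ((y - μ) / β))

/-- Modified Bessel function of the second kind of order zero,
K₀(z) = ∫₀^∞ exp(-z cosh u) du. -/
noncomputable def besselK0 (z : ℝ) : ℝ :=
  ∫ u in Set.Ioi (0 : ℝ), Real.exp (-z * Real.cosh u)

/-! In one coordinate, Tonelli turns E[(Y - X)⁺] into ∫ P(X < t ≤ Y) dt = ∫ F_X(t) S_Y(t) dt,
where F_X is the CDF of X and S_Y the survival function of Y. For the two Gumbel laws the product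
is exp(-e^{-(t-μx)/β} - e^{(t-μy)/β}) = exp(-z cosh((t - m)/β)) with m = (μx + μy)/2 and
z = 2e^{-(μy-μx)/(2β)}, so the substitution u = (t - m)/β gives β ∫_ℝ exp(-z cosh u) du = 2β K₀(z).
-/

open Set Filter Topology Real
open scoped ENNReal

theorem lintegral_ofReal_sub_mul_mul_eq_lintegral_Iio_mul_Ici {f g : ℝ → ℝ≥0∞}
    (hf : Measurable f) (hg : Measurable g) :
    ∫⁻ p : ℝ × ℝ, ENNReal.ofReal (p.2 - p.1) * f p.1 * g p.2 =
      ∫⁻ t, (∫⁻ x in Iio t, f x) * ∫⁻ y in Ici t, g y := by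
  have hlayer : ∀ p : ℝ × ℝ, ENNReal.ofReal (p.2 - p.1) * f p.1 * g p.2 =
      ∫⁻ t, (Iio t).indicator f p.1 * (Ici t).indicator g p.2 := fun p => by
    have hind : (fun t => (Iio t).indicator f p.1 * (Ici t).indicator g p.2) =
        (Ioc p.1 p.2).indicator fun _ => f p.1 * g p.2 := by
      ext t
      by_cases h1 : p.1 < t <;> by_cases h2 : t ≤ p.2 <;> simp [indicator, h1, h2]
    rw [hind, lintegral_indicator_const measurableSet_Ioc, Real.volume_Ioc, mul_assoc, mul_comm]
  have hmeas : Measurable (Function.uncurry fun (p : ℝ × ℝ) (t : ℝ) =>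
      (Iio t).indicator f p.1 * (Ici t).indicator g p.2) := by
    simp only [indicator_apply, mem_Iio, mem_Ici]
    exact (Measurable.ite (measurableSet_lt measurable_fst.fst measurable_snd)
      (hf.comp measurable_fst.fst) measurable_const).mul (Measurable.ite
      (measurableSet_le measurable_snd measurable_fst.snd) (hg.comp measurable_fst.snd)
      measurable_const)
  simp_rw [hlayer, Measure.volume_eq_prod]
  rw [lintegral_lintegral_swap hmeas.aemeasurable]
  refine lintegral_congr fun t => ?_
  rw [lintegral_prod_mul ((hf.indicator measurableSet_Iio).aemeasurable)
    ((hg.indicator measurableSet_Ici).aemeasurable), lintegral_indicator measurableSet_Iio,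
    lintegral_indicator measurableSet_Ici]

lemma sq_div_four_le_cosh (u : ℝ) : u ^ 2 / 4 ≤ cosh u := by
  rw [← cosh_abs, cosh_eq]
  nlinarith [quadratic_le_exp_of_nonneg (abs_nonneg u), exp_pos (-|u|), sq_abs u, abs_nonneg u]

lemma integrable_exp_neg_mul_cosh {z : ℝ} (hz : 0 < z) :
    Integrable fun u => exp (-z * cosh u) := by
  refine (integrable_exp_neg_mul_sq (b := z / 4) (by positivity)).mono' (by fun_prop)
    (ae_of_all _ fun u => ?_)
  rw [norm_of_nonneg (exp_pos _).le, exp_le_exp]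
  nlinarith [sq_div_four_le_cosh u]

lemma integral_exp_neg_mul_cosh (z : ℝ) : ∫ u, exp (-z * cosh u) = 2 * besselK0 z := by
  simpa only [cosh_abs, besselK0] using integral_comp_abs (f := fun u => exp (-z * cosh u))

lemma integral_exp_neg_mul_cosh_sub_div {β : ℝ} (hβ : 0 < β) (z c : ℝ) :
    ∫ t, exp (-z * cosh ((t - c) / β)) = 2 * β * besselK0 z := by
  rw [integral_sub_right_eq_self (fun t => exp (-z * cosh (t / β))) c,
    Measure.integral_comp_div (fun u => exp (-z * cosh u)), integral_exp_neg_mul_cosh,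
    abs_of_pos hβ, smul_eq_mul]
  ring

noncomputable def maxGumbelCDF (μ β x : ℝ) : ℝ := exp (-exp (-(x - μ) / β))

noncomputable def minGumbelSurvival (μ β y : ℝ) : ℝ := exp (-exp ((y - μ) / β))

section Gumbel

variable {μ β : ℝ}

lemma minGumbelPDF_nonneg (hβ : 0 < β) (y : ℝ) : 0 ≤ minGumbelPDF μ β y := by
  unfold minGumbelPDF; positivity

lemma maxGumbelPDF_nonneg (hβ : 0 < β) (x : ℝ) : 0 ≤ maxGumbelPDF μ β x := by
  unfold maxGumbelPDF; positivity

@[fun_prop]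
lemma continuous_minGumbelPDF : Continuous (minGumbelPDF μ β) := by
  unfold minGumbelPDF; fun_prop

@[fun_prop]
lemma continuous_maxGumbelPDF : Continuous (maxGumbelPDF μ β) := by
  unfold maxGumbelPDF; fun_prop

lemma maxGumbelPDF_neg (x : ℝ) : maxGumbelPDF μ β (-x) = minGumbelPDF (-μ) β x := by
  simp only [maxGumbelPDF, minGumbelPDF, sub_neg_eq_add, neg_sub, add_comm]

lemma maxGumbelCDF_neg (x : ℝ) : maxGumbelCDF μ β (-x) = minGumbelSurvival (-μ) β x := by
  simp only [maxGumbelCDF, minGumbelSurvival, sub_neg_eq_add, neg_sub, add_comm]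

lemma hasDerivAt_neg_minGumbelSurvival (y : ℝ) :
    HasDerivAt (fun y => -minGumbelSurvival μ β y) (minGumbelPDF μ β y) y := by
  have hlin : HasDerivAt (fun y => (y - μ) / β) (1 / β) y := by
    simpa using ((hasDerivAt_id y).sub_const μ).div_const β
  refine hlin.exp.neg.exp.neg.congr_deriv ?_
  simp only [minGumbelPDF, Pi.neg_apply, exp_sub, exp_neg]
  ring

lemma tendsto_minGumbelSurvival_atTop (hβ : 0 < β) :
    Tendsto (minGumbelSurvival μ β) atTop (𝓝 0) := by
  have hlin : Tendsto (fun y => (y - μ) / β) atTop atTop :=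
    (tendsto_atTop_add_const_right _ (-μ) tendsto_id).atTop_div_const hβ
  exact tendsto_exp_atBot.comp (tendsto_neg_atTop_atBot.comp (tendsto_exp_atTop.comp hlin))

lemma lintegral_Ici_minGumbelPDF (hβ : 0 < β) (t : ℝ) :
    ∫⁻ y in Ici t, ENNReal.ofReal (minGumbelPDF μ β y) =
      ENNReal.ofReal (minGumbelSurvival μ β t) := by
  have hderiv : ∀ y ∈ Ici t, HasDerivAt (fun y => -minGumbelSurvival μ β y)
      (minGumbelPDF μ β y) y := fun y _ => hasDerivAt_neg_minGumbelSurvival y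
  have hlim := (tendsto_minGumbelSurvival_atTop (μ := μ) hβ).neg
  rw [neg_zero] at hlim
  have hnonneg : ∀ y ∈ Ioi t, 0 ≤ minGumbelPDF μ β y := fun y _ => minGumbelPDF_nonneg hβ y
  rw [setLIntegral_congr Ioi_ae_eq_Ici.symm, ← ofReal_integral_eq_lintegral_ofReal
    (integrableOn_Ioi_deriv_of_nonneg' hderiv hnonneg hlim)
    (ae_of_all _ (minGumbelPDF_nonneg hβ)),
    integral_Ioi_of_hasDerivAt_of_nonneg' hderiv hnonneg hlim,
    zero_sub, neg_neg]

lemma lintegral_Iio_maxGumbelPDF (hβ : 0 < β) (t : ℝ) :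
    ∫⁻ x in Iio t, ENNReal.ofReal (maxGumbelPDF μ β x) =
      ENNReal.ofReal (maxGumbelCDF μ β t) := by
  have hneg := (Measure.measurePreserving_neg (volume : Measure ℝ)).setLIntegral_comp_preimage_emb
    (Homeomorph.neg ℝ).measurableEmbedding (fun x => ENNReal.ofReal (maxGumbelPDF μ β x))
    (Iio t)
  simp only [neg_preimage, neg_Iio, maxGumbelPDF_neg] at hneg
  rw [← hneg, setLIntegral_congr Ioi_ae_eq_Ici, lintegral_Ici_minGumbelPDF hβ,
    ← maxGumbelCDF_neg, neg_neg]

lemma maxGumbelCDF_mul_minGumbelSurvival (hβ : β ≠ 0) (μx μy t : ℝ) :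
    maxGumbelCDF μx β t * minGumbelSurvival μy β t =
      exp (-(2 * exp (-(μy - μx) / (2 * β))) * cosh ((t - (μx + μy) / 2) / β)) := by
  have hx : exp (-(t - μx) / β) =
      exp (-(μy - μx) / (2 * β)) * exp (-((t - (μx + μy) / 2) / β)) := by
    rw [← exp_add]; congr 1; field_simp; ring
  have hy : exp ((t - μy) / β) =
      exp (-(μy - μx) / (2 * β)) * exp ((t - (μx + μy) / 2) / β) := by
    rw [← exp_add]; congr 1; field_simp; ring
  rw [maxGumbelCDF, minGumbelSurvival, ← exp_add, cosh_eq, hx, hy]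
  ring_nf

lemma integrable_maxGumbelCDF_mul_minGumbelSurvival (hβ : 0 < β) (μx μy : ℝ) :
    Integrable fun t => maxGumbelCDF μx β t * minGumbelSurvival μy β t := by
  simp_rw [maxGumbelCDF_mul_minGumbelSurvival hβ.ne', div_eq_mul_inv _ β]
  exact ((integrable_comp_mul_right_iff _ (inv_ne_zero hβ.ne')).2
    (integrable_exp_neg_mul_cosh (by positivity))).comp_sub_right _

lemma integral_maxGumbelCDF_mul_minGumbelSurvival (hβ : 0 < β) (μx μy : ℝ) :
    ∫ t, maxGumbelCDF μx β t * minGumbelSurvival μy β t =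
      2 * β * besselK0 (2 * exp (-(μy - μx) / (2 * β))) := by
  simp_rw [maxGumbelCDF_mul_minGumbelSurvival hβ.ne', integral_exp_neg_mul_cosh_sub_div hβ]

lemma lintegral_ofReal_max_sub_mul_maxGumbelPDF_mul_minGumbelPDF (hβ : 0 < β) (μx μy : ℝ) :
    ∫⁻ p : ℝ × ℝ,
        ENNReal.ofReal (max (p.2 - p.1) 0 * maxGumbelPDF μx β p.1 * minGumbelPDF μy β p.2) =
      ∫⁻ t, ENNReal.ofReal (maxGumbelCDF μx β t * minGumbelSurvival μy β t) := calc
  _ = ∫⁻ p : ℝ × ℝ, ENNReal.ofReal (p.2 - p.1) * ENNReal.ofReal (maxGumbelPDF μx β p.1) *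
        ENNReal.ofReal (minGumbelPDF μy β p.2) := by
      refine lintegral_congr fun p => ?_
      rw [ENNReal.ofReal_mul (mul_nonneg (le_max_right _ _) (maxGumbelPDF_nonneg hβ _)),
        ENNReal.ofReal_mul (le_max_right _ _), ENNReal.ofReal_max, ENNReal.ofReal_zero,
        max_eq_left zero_le]
  _ = ∫⁻ t, ENNReal.ofReal (maxGumbelCDF μx β t) *
        ENNReal.ofReal (minGumbelSurvival μy β t) := by
      rw [lintegral_ofReal_sub_mul_mul_eq_lintegral_Iio_mul_Ici
        continuous_maxGumbelPDF.measurable.ennreal_ofReal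
        continuous_minGumbelPDF.measurable.ennreal_ofReal]
      simp only [lintegral_Iio_maxGumbelPDF hβ, lintegral_Ici_minGumbelPDF hβ]
  _ = _ := by simp only [maxGumbelCDF, ← ENNReal.ofReal_mul (exp_pos _).le]

theorem integral_max_sub_mul_maxGumbelPDF_mul_minGumbelPDF (hβ : 0 < β) (μx μy : ℝ) :
    ∫ p : ℝ × ℝ, max (p.2 - p.1) 0 * maxGumbelPDF μx β p.1 * minGumbelPDF μy β p.2 =
      2 * β * besselK0 (2 * exp (-(μy - μx) / (2 * β))) := by
  have hnonneg : ∀ p : ℝ × ℝ,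
      0 ≤ max (p.2 - p.1) 0 * maxGumbelPDF μx β p.1 * minGumbelPDF μy β p.2 := fun p =>
    mul_nonneg (mul_nonneg (le_max_right _ _) (maxGumbelPDF_nonneg hβ _))
      (minGumbelPDF_nonneg hβ _)
  have hprod_nonneg : ∀ t, 0 ≤ maxGumbelCDF μx β t * minGumbelSurvival μy β t := fun _ =>
    (mul_pos (exp_pos _) (exp_pos _)).le
  rw [integral_eq_lintegral_of_nonneg_ae (ae_of_all _ hnonneg) (by fun_prop),
    lintegral_ofReal_max_sub_mul_maxGumbelPDF_mul_minGumbelPDF hβ,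
    ← ofReal_integral_eq_lintegral_ofReal
      (integrable_maxGumbelCDF_mul_minGumbelSurvival hβ μx μy) (ae_of_all _ hprod_nonneg),
    ENNReal.toReal_ofReal (integral_nonneg hprod_nonneg),
    integral_maxGumbelCDF_mul_minGumbelSurvival hβ]

end Gumbel

/-- The expected volume of a d-dimensional Gumbel box with independent
coordinates X_j ~ MaxGumbel(μmin j, β), Y_j ~ MinGumbel(μmax j, β) factorizes
over dimensions: ∏_j E[max(Y_j - X_j, 0)] = ∏_j 2β·K₀(2e^{-(μmax j - μmin j)/(2β)}). -/
theorem gumbel_box_expected_volume_factorizes (d : ℕ) (β : ℝ) (hβ : 0 < β)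
    (μmin μmax : Fin d → ℝ) :
    (∏ j : Fin d, ∫ p : ℝ × ℝ,
        max (p.2 - p.1) 0 * maxGumbelPDF (μmin j) β p.1 * minGumbelPDF (μmax j) β p.2) =
      ∏ j : Fin d, 2 * β * besselK0 (2 * Real.exp (-(μmax j - μmin j) / (2 * β))) :=
  Finset.prod_congr rfl fun _ _ => integral_max_sub_mul_maxGumbelPDF_mul_minGumbelPDF hβ _ _
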